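/- Let 1 ≤ p ≤ 2 and let φ ∈ H^p(𝕋) be such that φ·f ∈ H^p for every f ∈ H^2(𝕋). Then φ ∈ H^{2p/(2−p)}(𝕋); in particular φ ∈ H^2. -/

import Mathlib

/-!
Every `g ∈ L²` splits as `f₁ + conj (z f₂)` with `f₁, f₂ ∈ H²`, and `|conj (z f₂)| = |f₂|`, so
multiplication by `φ` maps all of `L²` into `L^p`. A gliding-hump argument makes this map bounded,
`‖φ g‖_p ≤ C ‖g‖_2`. With `1/p = 1/q + 1/2`, testing the bound on `|φ| ^ (q/2)` truncated to
`{|φ| ≤ N}` gives `∫ |φ| ^ q ≤ C ^ q`; for `p = 2` testing it on the indicator of `{|φ| > C + 1}`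
shows that this set is null. Finally `q ≥ 2` because `p ≥ 1`.
-/

open MeasureTheory Complex ComplexConjugate
open scoped ENNReal

noncomputable section

instance : Fact ((0:ℝ) < 1) := ⟨zero_lt_one⟩

abbrev T1 := AddCircle (1:ℝ)

def zfun : T1 → ℂ := fun t => fourier 1 t

def hInner (f g : T1 → ℂ) : ℂ := ∫ t, f t * conj (g t)

def MemHp (p : ℝ≥0∞) (f : T1 → ℂ) : Prop :=
  MemLp f p volume ∧ ∀ n : ℤ, n < 0 → fourierCoeff f n = 0

def blaschke {n : ℕ} (α : Fin n → ℂ) : T1 → ℂ :=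
  fun t => ∏ i, (zfun t - α i) / (1 - conj (α i) * zfun t)

def MemH2B (B f : T1 → ℂ) : Prop :=
  MemHp 2 f ∧ ∀ ε : ℝ, 0 < ε → ∃ c : ℕ →₀ ℂ,
    eLpNorm (fun t => f t - ∑ m ∈ c.support, c m * (B t) ^ m) 2 volume < ENNReal.ofReal ε

open AddCircle

lemma ENNReal.le_rpow_of_rpow_inv_le_mul_rpow_inv {a C : ℝ≥0∞} {p q r : ℝ} (hq : 0 < q)
    (hr : 0 < r) (hpqr : p⁻¹ = q⁻¹ + r⁻¹) (ha : a ≠ ∞) (h : a ^ p⁻¹ ≤ C * a ^ r⁻¹) :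
    a ≤ C ^ q := by
  rcases eq_or_ne a 0 with rfl | ha0
  · exact zero_le
  have har0 : a ^ r⁻¹ ≠ 0 := by simp [ENNReal.rpow_eq_zero_iff, ha0, ha, hr]
  have hart : a ^ r⁻¹ ≠ ∞ := ENNReal.rpow_ne_top_of_nonneg (by positivity) ha
  have hq' : a ^ q⁻¹ ≤ C := by
    rw [hpqr, ENNReal.rpow_add _ _ ha0 ha] at h
    exact (ENNReal.mul_le_mul_iff_left har0 hart).1 h
  calc a = (a ^ q⁻¹) ^ q := by rw [← ENNReal.rpow_mul, inv_mul_cancel₀ hq.ne', ENNReal.rpow_one]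
    _ ≤ C ^ q := ENNReal.rpow_le_rpow hq' hq.le

lemma Complex.enorm_ofReal_toReal (y : ℝ≥0∞) :
    ‖((y.toReal : ℝ) : ℂ)‖ₑ = ENNReal.ofReal y.toReal := by
  rw [← ofReal_norm, Complex.norm_real, Real.norm_of_nonneg ENNReal.toReal_nonneg]

section Multiplier

variable {α : Type*} [MeasurableSpace α] {μ : Measure α} {ψ : α → ℂ}

lemma exists_eLpNorm_le_and_le_eLpNorm_mul {p r : ℝ≥0∞} (hr : r ≠ 0)
    (h : ∀ C, C ≠ ∞ → ∃ g : α → ℂ, MemLp g r μ ∧ C * eLpNorm g r μ < eLpNorm (ψ * g) p μ)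
    {ε : ℝ≥0∞} (hε : ε ≠ 0) (hε' : ε ≠ ∞) {M : ℝ≥0∞} (hM : M ≠ ∞) :
    ∃ g : α → ℂ, MemLp g r μ ∧ eLpNorm g r μ ≤ ε ∧ M ≤ eLpNorm (ψ * g) p μ := by
  obtain ⟨g, hg, hlt⟩ := h (M / ε) (ENNReal.div_ne_top hM hε)
  set n := eLpNorm g r μ
  have hn : n ≠ 0 := by
    intro hn
    have hg0 : ψ * g =ᵐ[μ] 0 := by
      filter_upwards [(eLpNorm_eq_zero_iff hg.1 hr).1 hn] with x hx
      simp [hx]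
    rw [hn, mul_zero, eLpNorm_congr_ae hg0, eLpNorm_zero] at hlt
    exact lt_irrefl _ hlt
  set c : ℝ := (ε / n).toReal
  have hc : ‖c‖ₑ = ε / n := by
    rw [Real.enorm_of_nonneg ENNReal.toReal_nonneg,
      ENNReal.ofReal_toReal (ENNReal.div_ne_top hε' hn)]
  refine ⟨c • g, hg.const_smul c, ?_, ?_⟩
  · rw [eLpNorm_const_smul, hc, ENNReal.div_mul_cancel hn hg.eLpNorm_ne_top]
  · rw [mul_smul_comm, eLpNorm_const_smul, hc]
    calc M = ε / n * (M / ε * n) := by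
          rw [mul_comm (M / ε), ← mul_assoc, ENNReal.div_mul_cancel hn hg.eLpNorm_ne_top,
            ENNReal.mul_div_cancel hε hε']
      _ ≤ ε / n * eLpNorm (ψ * g) p μ := by gcongr

theorem exists_eLpNorm_mul_le_of_forall_memLp_mul {p r : ℝ≥0∞} (hr : r ≠ 0) (hr' : r ≠ ∞)
    (h : ∀ g : α → ℂ, MemLp g r μ → MemLp (ψ * g) p μ) :
    ∃ C, C ≠ ∞ ∧ ∀ g : α → ℂ, MemLp g r μ → eLpNorm (ψ * g) p μ ≤ C * eLpNorm g r μ := by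
  by_contra! hbad
  set s := r.toReal
  have hs : 0 < s := ENNReal.toReal_pos hr hr'
  choose g hg hgr hgψ using fun k : ℕ =>
    exists_eLpNorm_le_and_le_eLpNorm_mul hr hbad (ε := (2⁻¹ ^ k) ^ s⁻¹)
      (by simp [ENNReal.rpow_eq_zero_iff, hs]) (by simp [ENNReal.rpow_eq_top_iff, hs])
      (M := k) (ENNReal.natCast_ne_top k)
  -- Summing `s`-th powers, not the pieces, avoids Minkowski's inequality for series.
  set S : α → ℝ≥0∞ := fun x => ∑' k, ‖g k x‖ₑ ^ s
  have hSm : AEMeasurable S μ :=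
    AEMeasurable.tsum fun k => (hg k).aestronglyMeasurable.enorm.pow_const s
  have hS : ∫⁻ x, S x ∂μ ≤ 2 := calc
    ∫⁻ x, S x ∂μ = ∑' k, ∫⁻ x, ‖g k x‖ₑ ^ s ∂μ :=
        lintegral_tsum fun k => (hg k).aestronglyMeasurable.enorm.pow_const s
    _ ≤ ∑' k : ℕ, (2⁻¹ : ℝ≥0∞) ^ k := by
        refine ENNReal.tsum_le_tsum fun k => ?_
        rw [lintegral_rpow_enorm_eq_rpow_eLpNorm' hs, ← eLpNorm_eq_eLpNorm' hr hr']
        calc eLpNorm (g k) r μ ^ s ≤ ((2⁻¹ ^ k) ^ s⁻¹) ^ s := by gcongr; exact hgr k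
          _ = 2⁻¹ ^ k := by rw [← ENNReal.rpow_mul, inv_mul_cancel₀ hs.ne', ENNReal.rpow_one]
    _ = 2 := by rw [ENNReal.tsum_geometric, ENNReal.one_sub_inv_two, inv_inv]
  set f : α → ℂ := fun x => ((S x ^ s⁻¹).toReal : ℂ)
  have hSf : ∀ x, ‖f x‖ₑ ^ s ≤ S x := fun x => calc
    ‖f x‖ₑ ^ s ≤ (S x ^ s⁻¹) ^ s := by
        rw [Complex.enorm_ofReal_toReal]; gcongr; exact ENNReal.ofReal_toReal_le
    _ = S x := by rw [← ENNReal.rpow_mul, inv_mul_cancel₀ hs.ne', ENNReal.rpow_one]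
  have hf : MemLp f r μ := by
    refine ⟨(Complex.measurable_ofReal.comp_aemeasurable
      (hSm.pow_const s⁻¹).ennreal_toReal).aestronglyMeasurable, ?_⟩
    rw [eLpNorm_lt_top_iff_lintegral_rpow_enorm_lt_top hr hr']
    exact ((lintegral_mono hSf).trans hS).trans_lt (by simp)
  have hgf : ∀ k, ∀ᵐ x ∂μ, ‖(ψ * g k) x‖ₑ ≤ ‖(ψ * f) x‖ₑ := by
    intro k
    filter_upwards [ae_lt_top' hSm (hS.trans_lt (by simp)).ne] with x hx
    rw [Pi.mul_apply, Pi.mul_apply, enorm_mul, enorm_mul, Complex.enorm_ofReal_toReal,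
      ENNReal.ofReal_toReal (ENNReal.rpow_ne_top_of_nonneg (by positivity) hx.ne)]
    gcongr
    calc ‖g k x‖ₑ = (‖g k x‖ₑ ^ s) ^ s⁻¹ := by
          rw [← ENNReal.rpow_mul, mul_inv_cancel₀ hs.ne', ENNReal.rpow_one]
      _ ≤ S x ^ s⁻¹ := by gcongr; exact ENNReal.le_tsum k
  obtain ⟨k, hk⟩ := ENNReal.exists_nat_gt (h f hf).eLpNorm_ne_top
  exact hk.not_ge ((hgψ k).trans (eLpNorm_mono_enorm_ae (hgf k)))

theorem memLp_top_of_eLpNorm_mul_le [IsFiniteMeasure μ] {r : ℝ≥0∞} (hr : r ≠ 0) (hr' : r ≠ ∞)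
    (hψ : AEStronglyMeasurable ψ μ) {C : ℝ≥0∞} (hC : C ≠ ∞)
    (hbound : ∀ g : α → ℂ, MemLp g r μ → eLpNorm (ψ * g) r μ ≤ C * eLpNorm g r μ) :
    MemLp ψ ∞ μ := by
  set E := {x | C + 1 < ‖ψ x‖ₑ}
  have hE : NullMeasurableSet E μ := nullMeasurableSet_lt aemeasurable_const hψ.enorm
  set m := μ E ^ (1 / r.toReal)
  have hm : (C + 1) * m ≤ C * m := calc
    (C + 1) * m = eLpNorm (E.indicator fun _ => C + 1) r μ := by
        rw [eLpNorm_indicator_const₀ hE hr hr', enorm_eq_self]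
    _ ≤ eLpNorm (ψ * E.indicator fun _ => (1 : ℂ)) r μ := by
        refine eLpNorm_mono_enorm fun x => ?_
        by_cases hx : x ∈ E
        · simpa [hx] using le_of_lt hx
        · simp [hx]
    _ ≤ C * eLpNorm (E.indicator fun _ => (1 : ℂ)) r μ :=
        hbound _ (.of_bound (aestronglyMeasurable_const.indicator₀ hE) 1
          (ae_of_all _ fun x => by simpa using norm_indicator_le_norm_self (fun _ => (1 : ℂ)) x))
    _ = C * m := by rw [eLpNorm_indicator_const₀ hE hr hr', enorm_one, one_mul]
  have hμE : μ E = 0 := by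
    by_contra hE0
    have hm0 : m ≠ 0 := by simp [m, ENNReal.rpow_eq_zero_iff, hE0, measure_ne_top μ E]
    have hmt : m ≠ ∞ := ENNReal.rpow_ne_top_of_nonneg (by positivity) (measure_ne_top μ E)
    exact (ENNReal.lt_add_right hC one_ne_zero).not_ge
      ((ENNReal.mul_le_mul_iff_left hm0 hmt).1 hm)
  have hbdd : ∀ᵐ x ∂μ, ‖ψ x‖ₑ ≤ C + 1 := ae_iff.2 (by simpa [not_le] using hμE)
  refine ⟨hψ, ?_⟩
  rw [eLpNorm_exponent_top]
  exact (eLpNormEssSup_le_of_ae_enorm_bound hbdd).trans_lt (by simpa using hC.lt_top)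

lemma eLpNorm_ofReal_eq_of_enorm_eq_indicator_rpow {ε : Type*} [ENorm ε] {f : α → ε}
    {w : α → ℝ≥0∞} {s : Set α} (hs : NullMeasurableSet s μ) {a t : ℝ} (ht : 0 < t)
    (hf : ∀ x, ‖f x‖ₑ = s.indicator (fun x => w x ^ a) x) :
    eLpNorm f (.ofReal t) μ = (∫⁻ x in s, w x ^ (a * t) ∂μ) ^ t⁻¹ := by
  rw [eLpNorm_eq_lintegral_rpow_enorm_toReal (by simpa using ht) ENNReal.ofReal_ne_top,
    ENNReal.toReal_ofReal ht.le, one_div, ← lintegral_indicator₀ hs]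
  congr 2
  funext x
  rw [hf]
  by_cases hx : x ∈ s
  · simp [hx, ← ENNReal.rpow_mul]
  · simp [hx, ENNReal.zero_rpow_of_pos ht]

theorem memLp_of_eLpNorm_mul_le [IsFiniteMeasure μ] {p q r : ℝ} (hq : 0 < q) (hr : 0 < r)
    (hpqr : p⁻¹ = q⁻¹ + r⁻¹) (hψ : AEStronglyMeasurable ψ μ) {C : ℝ≥0∞} (hC : C ≠ ∞)
    (hbound : ∀ g : α → ℂ, MemLp g (.ofReal r) μ →
      eLpNorm (ψ * g) (.ofReal p) μ ≤ C * eLpNorm g (.ofReal r) μ) :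
    MemLp ψ (.ofReal q) μ := by
  have hp : 0 < p := inv_pos.1 (hpqr ▸ by positivity)
  have hpq : (1 + q / r) * p = q := by
    field_simp at hpqr ⊢
    linarith
  set E : ℕ → Set α := fun N => {x | ‖ψ x‖ₑ ≤ N}
  have hE : ∀ N, NullMeasurableSet (E N) μ := fun N =>
    nullMeasurableSet_le hψ.enorm aemeasurable_const
  set I : ℕ → ℝ≥0∞ := fun N => ∫⁻ x in E N, ‖ψ x‖ₑ ^ q ∂μ
  have hI : ∀ N, I N ≠ ∞ := by
    intro N
    refine ne_top_of_le_ne_top (b := ∫⁻ _ in E N, (N : ℝ≥0∞) ^ q ∂μ) ?_ ?_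
    · simp [ENNReal.mul_eq_top, ENNReal.rpow_eq_top_iff, hq.not_gt]
    · exact setLIntegral_mono measurable_const fun x hx => by gcongr; exact hx
  have hIC : ∀ N, I N ≤ C ^ q := by
    intro N
    have hfin : ∀ x, ‖ψ x‖ₑ ^ (q / r) ≠ ∞ := fun x =>
      ENNReal.rpow_ne_top_of_nonneg (by positivity) enorm_ne_top
    set g : α → ℂ := (E N).indicator fun x => ((‖ψ x‖ₑ ^ (q / r)).toReal : ℂ)
    have hg : ∀ x, ‖g x‖ₑ = (E N).indicator (fun x => ‖ψ x‖ₑ ^ (q / r)) x := by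
      intro x
      simp [g, enorm_indicator_eq_indicator_enorm, Complex.enorm_ofReal_toReal,
        ENNReal.ofReal_toReal, hfin]
    have hψg : ∀ x, ‖(ψ * g) x‖ₑ = (E N).indicator (fun x => ‖ψ x‖ₑ ^ (1 + q / r)) x := by
      intro x
      rw [Pi.mul_apply, enorm_mul, hg]
      by_cases hx : x ∈ E N
      · rw [Set.indicator_of_mem hx, Set.indicator_of_mem hx,
          ENNReal.rpow_add_of_nonneg _ _ zero_le_one (by positivity), ENNReal.rpow_one]
      · simp [hx]
    have hgr : eLpNorm g (.ofReal r) μ = I N ^ r⁻¹ := by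
      rw [eLpNorm_ofReal_eq_of_enorm_eq_indicator_rpow (hE N) hr hg, div_mul_cancel₀ q hr.ne']
    have hψgp : eLpNorm (ψ * g) (.ofReal p) μ = I N ^ p⁻¹ := by
      rw [eLpNorm_ofReal_eq_of_enorm_eq_indicator_rpow (hE N) hp hψg, hpq]
    have hgmem : MemLp g (.ofReal r) μ := by
      refine ⟨?_, ?_⟩
      · exact (Complex.measurable_ofReal.comp_aemeasurable
          (hψ.enorm.pow_const _).ennreal_toReal).aestronglyMeasurable.indicator₀ (hE N)
      · rw [hgr]; exact ENNReal.rpow_lt_top_of_nonneg (by positivity) (hI N)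
    refine ENNReal.le_rpow_of_rpow_inv_le_mul_rpow_inv hq hr hpqr (hI N) ?_
    rw [← hgr, ← hψgp]
    exact hbound g hgmem
  have hψq : ∫⁻ x, ‖ψ x‖ₑ ^ q ∂μ ≤ C ^ q := by
    have hU : ⋃ N, E N = Set.univ := Set.eq_univ_of_forall fun x =>
      Set.mem_iUnion.2 ((ENNReal.exists_nat_gt enorm_ne_top).imp fun _ hN => hN.le)
    have hEmono : Monotone E := fun N M hNM x hx => le_trans (α := ℝ≥0∞) hx (Nat.cast_le.2 hNM)
    rw [← setLIntegral_univ, ← hU, setLIntegral_iUnion_of_directed _ hEmono.directed_le]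
    exact iSup_le hIC
  refine ⟨hψ, (eLpNorm_lt_top_iff_lintegral_rpow_enorm_lt_top (by simpa using hq)
    ENNReal.ofReal_ne_top).2 ?_⟩
  rw [ENNReal.toReal_ofReal hq.le]
  exact hψq.trans_lt (ENNReal.rpow_lt_top_of_nonneg hq.le hC)

end Multiplier

lemma volume_eq_haarAddCircle : (volume : Measure T1) = haarAddCircle := by
  rw [volume_eq_smul_haarAddCircle]
  simp

lemma norm_zfun (t : T1) : ‖zfun t‖ = 1 := by
  simp [zfun, fourier_apply, Circle.norm_coe]

lemma continuous_zfun : Continuous zfun := (fourier 1).continuous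

lemma conj_zfun_mul_zfun (t : T1) : conj (zfun t) * zfun t = 1 := by
  rw [mul_comm, mul_conj, normSq_eq_norm_sq, norm_zfun, one_pow, ofReal_one]

lemma fourierCoeff_conj_zfun_mul (h : T1 → ℂ) (n : ℤ) :
    fourierCoeff (fun t => conj (zfun t * h t)) n = conj (fourierCoeff h (-(n + 1))) := by
  simp only [fourierCoeff, zfun, smul_eq_mul, ← integral_conj, map_mul, neg_neg, fourier_add,
    fourier_neg]
  congr 1
  funext t
  ring

theorem exists_memHp_two_eq_add_conj_zfun_mul {g : T1 → ℂ} (hg : MemLp g 2 volume) :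
    ∃ f₁ f₂, MemHp 2 f₁ ∧ MemHp 2 f₂ ∧ g = fun t => f₁ t + conj (zfun t * f₂ t) := by
  rw [volume_eq_haarAddCircle] at hg
  set G := hg.toLp g
  set F : Lp ℂ 2 (haarAddCircle (T := 1)) := fourierBasis.repr.symm
    ⟨fun n => if 0 ≤ n then fourierBasis.repr G n else 0,
      (lp.memℓp (fourierBasis.repr G)).mono' fun n => by split_ifs <;> simp⟩
  set H := G - F
  have hF : ∀ n, fourierCoeff F n = if 0 ≤ n then fourierCoeff G n else 0 := fun n => by
    rw [← fourierBasis_repr, ← fourierBasis_repr, LinearIsometryEquiv.apply_symm_apply]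
  have hH : ∀ n, 0 ≤ n → fourierCoeff H n = 0 := fun n hn => by
    rw [← fourierBasis_repr, map_sub, lp.coeFn_sub, Pi.sub_apply, fourierBasis_repr,
      fourierBasis_repr, hF, if_pos hn, sub_self]
  simp only [MemHp, volume_eq_haarAddCircle]
  refine ⟨fun t => g t - H t, fun t => conj (zfun t * H t), ?_, ?_, ?_⟩
  · have hgF : (fun t => g t - H t) =ᵐ[haarAddCircle] F := by
      filter_upwards [hg.coeFn_toLp, Lp.coeFn_sub G F] with t hGt hHt
      rw [hHt, Pi.sub_apply, ← hGt]
      ring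
    refine ⟨(Lp.memLp F).ae_eq hgF.symm, fun n hn => ?_⟩
    rw [fourierCoeff_congr_ae hgF, hF, if_neg (not_le.2 hn)]
  · refine ⟨?_, fun n hn => ?_⟩
    · refine (Lp.memLp H).of_le ?_ (ae_of_all _ fun t => by simp [norm_zfun])
      exact continuous_conj.comp_aestronglyMeasurable
        (continuous_zfun.aestronglyMeasurable.mul (Lp.aestronglyMeasurable H))
    · rw [fourierCoeff_conj_zfun_mul, hH _ (by omega), map_zero]
  · funext t
    rw [map_mul, conj_conj, ← mul_assoc, conj_zfun_mul_zfun, one_mul, sub_add_cancel]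

theorem memLp_mul_of_forall_memHp_two {φ : T1 → ℂ} {P : ℝ≥0∞}
    (hφ : AEStronglyMeasurable φ volume)
    (hmul : ∀ f : T1 → ℂ, MemHp 2 f → MemLp (φ * f) P volume) {g : T1 → ℂ}
    (hg : MemLp g 2 volume) : MemLp (φ * g) P volume := by
  obtain ⟨f₁, f₂, hf₁, hf₂, rfl⟩ := exists_memHp_two_eq_add_conj_zfun_mul hg
  have h₂ : MemLp (fun t => φ t * conj (zfun t * f₂ t)) P volume := by
    refine (hmul f₂ hf₂).of_le (hφ.mul ?_) (ae_of_all _ fun t => by simp [norm_zfun])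
    exact continuous_conj.comp_aestronglyMeasurable
      (continuous_zfun.aestronglyMeasurable.mul hf₂.1.1)
  convert (hmul f₁ hf₁).add h₂ using 1
  ext t
  exact mul_add _ _ _

theorem Hp_multiplier_in_H2pdiv (p : ℝ) (hp1 : 1 ≤ p) (hp2 : p ≤ 2) (φ : T1 → ℂ)
    (hφ : MemHp (ENNReal.ofReal p) φ)
    (hmul : ∀ f : T1 → ℂ, MemHp 2 f → MemHp (ENNReal.ofReal p) (fun t => φ t * f t)) :
    MemHp (if p = 2 then ⊤ else ENNReal.ofReal (2 * p / (2 - p))) φ ∧ MemHp 2 φ := by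
  obtain ⟨⟨hφm, -⟩, hφcoeff⟩ := hφ
  obtain ⟨C, hC, hbound⟩ := exists_eLpNorm_mul_le_of_forall_memLp_mul two_ne_zero
    ENNReal.ofNat_ne_top fun g => memLp_mul_of_forall_memHp_two hφm fun f hf => (hmul f hf).1
  rcases hp2.lt_or_eq with hp2 | rfl
  · have hq : 0 < 2 * p / (2 - p) := div_pos (by linarith) (by linarith)
    have hφq : MemLp φ (.ofReal (2 * p / (2 - p))) volume :=
      memLp_of_eLpNorm_mul_le (p := p) hq two_pos (by field_simp; ring) hφm hC
        (by simpa using hbound)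
    have h2q : (2 : ℝ≥0∞) ≤ .ofReal (2 * p / (2 - p)) := by
      rw [← ENNReal.ofReal_ofNat 2]
      exact ENNReal.ofReal_le_ofReal ((le_div_iff₀ (by linarith)).2 (by linarith))
    rw [if_neg hp2.ne]
    exact ⟨⟨hφq, hφcoeff⟩, hφq.mono_exponent h2q, hφcoeff⟩
  · have hφ_top : MemLp φ ⊤ volume := memLp_top_of_eLpNorm_mul_le two_ne_zero
      ENNReal.ofNat_ne_top hφm hC (by simpa using hbound)
    rw [if_pos rfl]
    exact ⟨⟨hφ_top, hφcoeff⟩, hφ_top.mono_exponent le_top, hφcoeff⟩
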